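/- arXiv:1905.02404 — 4 statements merged into one kernel-verified Lean document; each statement's English description precedes it below -/
import Mathlib

section
/- If δu_i[u] is the characteristic of a symmetry of F^a[u] = 0 and δρ_a[u,ρ] are arbitrary local functions, then the characteristic {δu_i, δρ_a} is an on-shell symmetry of the auxiliary Lagrangian L̂[u,ρ] = F^a[u]ρ_a with flux K^μ = 0, and the corresponding Noether current of the Euler–Lagrange system F^a = 0, E^i(L̂) = 0 equals the boundary current j^μ_{(Fρ)}, which does not depend on the choice of δρ_a. -/
namespace Paper

/-- The base space ℝ^{D+1} (coordinates x^μ, μ = 0,…,D). -/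
abbrev Ed (D : ℕ) := Fin (D + 1) → ℝ

/-- Partial derivative ∂_μ of a real function on ℝ^{D+1}. -/
noncomputable def pd {D : ℕ} (μ : Fin (D + 1)) (f : Ed D → ℝ) : Ed D → ℝ :=
  fun x => fderiv ℝ f x (Pi.single μ 1)

/-- Iterated partial derivatives ∂_{μ₁…μ_k} along a list of directions. -/
noncomputable def pds {D : ℕ} : List (Fin (D + 1)) → (Ed D → ℝ) → Ed D → ℝ
  | [], f => f
  | μ :: l, f => pd μ (pds l f)

/-- Total divergence D_μ J^μ of a current. -/
noncomputable def Dvg {D : ℕ} (J : Fin (D + 1) → Ed D → ℝ) : Ed D → ℝ :=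
  fun x => ∑ μ, pd μ (J μ) x

/-- Multi-indices of order ≤ m: ordered tuples of coordinate directions. -/
abbrev MIdx (m D : ℕ) := Σ k : Fin (m + 1), (Fin (k : ℕ) → Fin (D + 1))

def MIdx.toList {m D : ℕ} (β : MIdx m D) : List (Fin (D + 1)) := List.ofFn β.2

def zeroIdx {m D : ℕ} : MIdx m D := ⟨⟨0, Nat.succ_pos m⟩, fun t => t.elim0⟩

def oneIdx {m D : ℕ} (hm : 0 < m) (μ : Fin (D + 1)) : MIdx m D :=
  ⟨⟨1, Nat.succ_lt_succ hm⟩, fun _ => μ⟩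

/-- The jet space of order m for fields indexed by ι. -/
abbrev Jet (ι : Type) (m D : ℕ) := (ι × MIdx m D) → ℝ

/-- The m-jet of a field configuration at a point. -/
noncomputable def jet {D : ℕ} {ι : Type} (m : ℕ) (u : ι → Ed D → ℝ) (x : Ed D) :
    Jet ι m D := fun c => pds (MIdx.toList c.2) (u c.1) x

/-- Evaluation of a local function on a field configuration: f[u](x). -/
noncomputable def realize {D : ℕ} {ι : Type} (m : ℕ) (f : Ed D × Jet ι m D → ℝ)
    (u : ι → Ed D → ℝ) : Ed D → ℝ :=
  fun x => f (x, jet m u x)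

/-- Partial derivative ∂f/∂(∂_β u_i) of a local function w.r.t. a jet coordinate. -/
noncomputable def jpd {D : ℕ} {ι : Type} [Fintype ι] [DecidableEq ι] {m : ℕ}
    (f : Ed D × Jet ι m D → ℝ) (c : ι × MIdx m D) : Ed D × Jet ι m D → ℝ :=
  fun p => fderiv ℝ f p (0, Pi.single c 1)

/-- Smooth fields on Ω. -/
def SmoothFields {D : ℕ} {ι : Type} (Ω : Set (Ed D)) (u : ι → Ed D → ℝ) : Prop :=
  ∀ i, ContDiffOn ℝ (⊤ : ℕ∞) (u i) Ω

/-- Variation δf of a local function along a characteristic, the latter given by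
its realized component functions v_i. -/
noncomputable def variation {D : ℕ} {ι : Type} [Fintype ι] [DecidableEq ι] (m : ℕ)
    (f : Ed D × Jet ι m D → ℝ) (u v : ι → Ed D → ℝ) : Ed D → ℝ :=
  fun x => ∑ c : ι × MIdx m D, jpd f c (x, jet m u x) * pds (MIdx.toList c.2) (v c.1) x

/-- Euler–Lagrange derivative E^i(f) of a local function, evaluated on u. -/
noncomputable def EL {D : ℕ} {ι : Type} [Fintype ι] [DecidableEq ι] (m : ℕ)
    (f : Ed D × Jet ι m D → ℝ) (u : ι → Ed D → ℝ) (i : ι) : Ed D → ℝ :=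
  fun x => ∑ β : MIdx m D, (-1 : ℝ) ^ (β.1 : ℕ) *
    pds (MIdx.toList β) (fun y => jpd f (i, β) (y, jet m u y)) x

/-- The general integration-by-parts boundary current 𝒢^μ. -/
noncomputable def bdryG {D : ℕ} {A : Type} [Fintype A] (m : ℕ)
    (G : A × MIdx m D → Ed D → ℝ) (ε : A → Ed D → ℝ) (μ : Fin (D + 1)) : Ed D → ℝ :=
  fun x => ∑ a : A, ∑ k : Fin m, ∑ lam : Fin (k : ℕ) → Fin (D + 1),
    ∑ j ∈ Finset.range ((k : ℕ) + 1),
      (-1 : ℝ) ^ j *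
        pds ((List.ofFn lam).take j)
          (G (a, ⟨⟨(k : ℕ) + 1, Nat.succ_lt_succ k.isLt⟩, Fin.cons μ lam⟩)) x *
        pds ((List.ofFn lam).drop j) (ε a) x

/-- Ĝ_α = Σ_β (−1)^{|β|} ∂_β G_α^β. -/
noncomputable def hatG {D : ℕ} {A : Type} (m : ℕ)
    (G : A × MIdx m D → Ed D → ℝ) (a : A) : Ed D → ℝ :=
  fun x => ∑ β : MIdx m D, (-1 : ℝ) ^ (β.1 : ℕ) * pds (MIdx.toList β) (G (a, β)) x

/-- The boundary current j^μ of a local function f w.r.t. a characteristic v at u. -/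
noncomputable def lfBdry {D : ℕ} {ι : Type} [Fintype ι] [DecidableEq ι] (m : ℕ)
    (f : Ed D × Jet ι m D → ℝ) (u v : ι → Ed D → ℝ) (μ : Fin (D + 1)) : Ed D → ℝ :=
  bdryG m (fun c x => jpd f c (x, jet m u x)) v μ

/-- j^μ_{(Fρ)}: the boundary current of F^aρ_a in which ρ_a is not differentiated
(ρ_a substituted after the differentiations). -/
noncomputable def jFrho {D : ℕ} {ι κ : Type} [Fintype ι] [DecidableEq ι] [Fintype κ] (m : ℕ)
    (F : κ → Ed D × Jet ι m D → ℝ) (u : ι → Ed D → ℝ) (ρ : κ → Ed D → ℝ)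
    (v : ι → Ed D → ℝ) (μ : Fin (D + 1)) : Ed D → ℝ :=
  bdryG m (fun c x => ∑ a, jpd (F a) c (x, jet m u x) * ρ a x) v μ

/-- j^μ_{(F̃q)}|_{F̃=F}: only q_a is differentiated, F^a treated as a function of x. -/
noncomputable def jFtilq {D : ℕ} {ι κ : Type} [Fintype ι] [DecidableEq ι] [Fintype κ] (m : ℕ)
    (F q : κ → Ed D × Jet ι m D → ℝ) (u v : ι → Ed D → ℝ) (μ : Fin (D + 1)) : Ed D → ℝ :=
  bdryG m (fun c x => ∑ a, F a (x, jet m u x) * jpd (q a) c (x, jet m u x)) v μ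

/-- The adjoint equations' left-hand side E^i(F^aρ_a), with the ρ_a treated as
independent fields and their values substituted after the differentiations. -/
noncomputable def adjointOp {D : ℕ} {ι κ : Type} [Fintype ι] [DecidableEq ι] [Fintype κ] (m : ℕ)
    (F : κ → Ed D × Jet ι m D → ℝ) (u : ι → Ed D → ℝ) (ρ : κ → Ed D → ℝ) (i : ι) : Ed D → ℝ :=
  fun x => ∑ β : MIdx m D, (-1 : ℝ) ^ (β.1 : ℕ) *
    pds (MIdx.toList β) (fun y => ∑ a, jpd (F a) (i, β) (y, jet m u y) * ρ a y) x

/-- Solutions of the system F^a = 0 on Ω. -/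
def IsSol {D : ℕ} {ι κ : Type} (m : ℕ) (Ω : Set (Ed D)) (F : κ → Ed D × Jet ι m D → ℝ)
    (u : ι → Ed D → ℝ) : Prop :=
  SmoothFields Ω u ∧ ∀ a, ∀ x ∈ Ω, realize m (F a) u x = 0

/-- A characteristic δu (given by local functions) is a symmetry of F = 0. -/
def IsSymmetry {D : ℕ} {ι κ : Type} [Fintype ι] [DecidableEq ι] (m : ℕ) (Ω : Set (Ed D))
    (F : κ → Ed D × Jet ι m D → ℝ) (δu : ι → Ed D × Jet ι m D → ℝ) : Prop :=
  ∀ u, IsSol m Ω F u → ∀ a, ∀ x ∈ Ω,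
    variation m (F a) u (fun i => realize m (δu i) u) x = 0

/-- The u-part of a combined (u, ρ) jet. -/
def uPartJet {D : ℕ} {ι κ : Type} {m : ℕ} (z : Jet (ι ⊕ κ) m D) : Jet ι m D :=
  fun c => z (Sum.inl c.1, c.2)

/-- The auxiliary Lagrangian L̂ = F^a ρ_a as a local function of the combined fields (u, ρ). -/
noncomputable def Lhat {D : ℕ} {ι κ : Type} [Fintype κ] {m : ℕ}
    (F : κ → Ed D × Jet ι m D → ℝ) : Ed D × Jet (ι ⊕ κ) m D → ℝ :=
  fun p => ∑ a, F a (p.1, uPartJet p.2) * p.2 (Sum.inr a, zeroIdx)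

/-- The product F^a q_a as a single local function of u. -/
noncomputable def prodFq {D : ℕ} {ι κ : Type} [Fintype κ] {m : ℕ}
    (F q : κ → Ed D × Jet ι m D → ℝ) : Ed D × Jet ι m D → ℝ :=
  fun p => ∑ a, F a p * q a p

/-- Conservation law multiplier: F^a q_a = D_μ J^μ for every smooth u. -/
def Multiplier {D : ℕ} {ι κ : Type} [Fintype κ] (m : ℕ) (Ω : Set (Ed D))
    (F q : κ → Ed D × Jet ι m D → ℝ) (J : Fin (D + 1) → Ed D × Jet ι m D → ℝ) : Prop :=
  ∀ u, SmoothFields Ω u → ∀ x ∈ Ω,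
    (∑ a, realize m (F a) u x * realize m (q a) u x) = Dvg (fun μ => realize m (J μ) u) x

/-- Equivalence of configuration-indexed local currents relative to the system F = 0:
the difference is an identically conserved local current plus a local current
vanishing on all solutions. -/
def EquivCurrents {D : ℕ} {ι κ : Type} [Fintype ι] (m : ℕ) (Ω : Set (Ed D))
    (F : κ → Ed D × Jet ι m D → ℝ)
    (C1 C2 : (ι → Ed D → ℝ) → Fin (D + 1) → Ed D → ℝ) : Prop :=
  ∃ (m' : ℕ) (Jb Jh : Fin (D + 1) → Ed D × Jet ι m' D → ℝ),
    (∀ μ, ContDiff ℝ (⊤ : ℕ∞) (Jb μ)) ∧ (∀ μ, ContDiff ℝ (⊤ : ℕ∞) (Jh μ)) ∧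
    (∀ u, SmoothFields Ω u → ∀ μ, ∀ x ∈ Ω,
      C1 u μ x - C2 u μ x = realize m' (Jb μ) u x + realize m' (Jh μ) u x) ∧
    (∀ u, SmoothFields Ω u → ∀ x ∈ Ω, Dvg (fun μ => realize m' (Jb μ) u) x = 0) ∧
    (∀ u, IsSol m Ω F u → ∀ μ, ∀ x ∈ Ω, realize m' (Jh μ) u x = 0)

/-- Linearization G^a of F^a around the configuration u. -/
noncomputable def linearize {D : ℕ} {ι κ : Type} [Fintype ι] (m : ℕ)
    (F : κ → Ed D × Jet ι m D → ℝ) (u : ι → Ed D → ℝ) :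
    κ → Ed D × Jet ι m D → ℝ :=
  fun a p => fderiv ℝ (F a) (p.1, jet m u p.1) ((0 : Ed D), p.2)

/- ### Extended systems: fields (u, g), with F depending on g but not on its derivatives. -/

/-- Domain of extended local functions: base point, jet of u, and the values of g. -/
abbrev PJet (ι γ : Type) (m D : ℕ) := Ed D × Jet ι m D × (γ → ℝ)

noncomputable def realizeP {D : ℕ} {ι γ : Type} (m : ℕ)
    (f : PJet ι γ m D → ℝ) (u : ι → Ed D → ℝ) (g : γ → Ed D → ℝ) : Ed D → ℝ :=
  fun x => f (x, jet m u x, fun l => g l x)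

/-- ∂f/∂g_l for extended local functions. -/
noncomputable def gpd {D : ℕ} {ι γ : Type} [Fintype ι] [Fintype γ] [DecidableEq γ] {m : ℕ}
    (f : PJet ι γ m D → ℝ) (l : γ) : PJet ι γ m D → ℝ :=
  fun p => fderiv ℝ f p (0, 0, Pi.single l 1)

/-- ∂f/∂(∂_β u_i) for extended local functions. -/
noncomputable def jpdP {D : ℕ} {ι γ : Type} [Fintype ι] [DecidableEq ι] [Fintype γ] {m : ℕ}
    (f : PJet ι γ m D → ℝ) (c : ι × MIdx m D) : PJet ι γ m D → ℝ :=
  fun p => fderiv ℝ f p (0, Pi.single c 1, 0)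

/-- An extended local function viewed as a local function of the combined fields (u, g). -/
noncomputable def liftP {D : ℕ} {ι γ : Type} {m : ℕ} (f : PJet ι γ m D → ℝ) :
    Ed D × Jet (ι ⊕ γ) m D → ℝ :=
  fun p => f (p.1, fun c => p.2 (Sum.inl c.1, c.2), fun l => p.2 (Sum.inr l, zeroIdx))

/-- Setting all the derivatives of g to zero in a local function of (u, g). -/
noncomputable def dropGDerivs {D : ℕ} {ι γ : Type} {m : ℕ}
    (f : Ed D × Jet (ι ⊕ γ) m D → ℝ) : PJet ι γ m D → ℝ :=
  fun p => f (p.1, fun w =>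
    match w with
    | (Sum.inl i, β) => p.2.1 (i, β)
    | (Sum.inr l, β) => if (β.1 : ℕ) = 0 then p.2.2 l else 0)

/-- Parameterized conservation law multiplier: F^a q_a = D_μ J^μ for every smooth u
and every constant g. -/
def ParamMultiplier {D : ℕ} {ι γ κ : Type} [Fintype κ] (m : ℕ) (Ω : Set (Ed D))
    (F q : κ → PJet ι γ m D → ℝ) (J : Fin (D + 1) → PJet ι γ m D → ℝ) : Prop :=
  ∀ u, SmoothFields Ω u → ∀ c : γ → ℝ, ∀ x ∈ Ω,
    (∑ a, F a (x, jet m u x, c) * q a (x, jet m u x, c)) =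
      Dvg (fun μ y => J μ (y, jet m u y, c)) x

/-- Solutions of the extended system F^a = 0, ∂_μ g_l = 0 on Ω. -/
def ExtSol {D : ℕ} {ι γ κ : Type} (m : ℕ) (Ω : Set (Ed D))
    (F : κ → PJet ι γ m D → ℝ) (u : ι → Ed D → ℝ) (g : γ → Ed D → ℝ) : Prop :=
  SmoothFields Ω u ∧ SmoothFields Ω g ∧
    (∀ a, ∀ x ∈ Ω, realizeP m (F a) u g x = 0) ∧
    (∀ l μ, ∀ x ∈ Ω, pd μ (g l) x = 0)

/-- Conservation law multiplier {q_a, θ^{μl}} for the extended system, with current J. -/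
def ExtMultiplier {D : ℕ} {ι γ κ : Type} [Fintype κ] [Fintype γ] (m : ℕ) (Ω : Set (Ed D))
    (F q : κ → PJet ι γ m D → ℝ) (θ : Fin (D + 1) → γ → PJet ι γ m D → ℝ)
    (J : Fin (D + 1) → PJet ι γ m D → ℝ) : Prop :=
  ∀ u g, SmoothFields Ω u → SmoothFields Ω g → ∀ x ∈ Ω,
    ((∑ a, realizeP m (F a) u g x * realizeP m (q a) u g x) +
      ∑ μ, ∑ l, pd μ (g l) x * realizeP m (θ μ l) u g x) =
    Dvg (fun μ => realizeP m (J μ) u g) x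

/-- j^μ_{(Fρ)} for an extended system. -/
noncomputable def jFrhoP {D : ℕ} {ι γ κ : Type} [Fintype ι] [DecidableEq ι] [Fintype γ]
    [Fintype κ] (m : ℕ) (F : κ → PJet ι γ m D → ℝ) (u : ι → Ed D → ℝ) (g : γ → Ed D → ℝ)
    (ρ : κ → Ed D → ℝ) (v : ι → Ed D → ℝ) (μ : Fin (D + 1)) : Ed D → ℝ :=
  bdryG m (fun c x => ∑ a, jpdP (F a) c (x, jet m u x, fun l => g l x) * ρ a x) v μ

/-- j^μ_{(F̃q)}|_{F̃=F} for an extended system. -/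
noncomputable def jFtilqP {D : ℕ} {ι γ κ : Type} [Fintype ι] [DecidableEq ι] [Fintype γ]
    [Fintype κ] (m : ℕ) (F q : κ → PJet ι γ m D → ℝ) (u : ι → Ed D → ℝ) (g : γ → Ed D → ℝ)
    (v : ι → Ed D → ℝ) (μ : Fin (D + 1)) : Ed D → ℝ :=
  bdryG m (fun c x =>
    ∑ a, realizeP m (F a) u g x * jpdP (q a) c (x, jet m u x, fun l => g l x)) v μ

/-- The adjoint equations E^i(F^aρ_a) for an extended system. -/
noncomputable def adjointOpP {D : ℕ} {ι γ κ : Type} [Fintype ι] [DecidableEq ι] [Fintype γ]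
    [Fintype κ] (m : ℕ) (F : κ → PJet ι γ m D → ℝ) (u : ι → Ed D → ℝ) (g : γ → Ed D → ℝ)
    (ρ : κ → Ed D → ℝ) (i : ι) : Ed D → ℝ :=
  fun x => ∑ β : MIdx m D, (-1 : ℝ) ^ (β.1 : ℕ) *
    pds (MIdx.toList β)
      (fun y => ∑ a, jpdP (F a) (i, β) (y, jet m u y, fun l => g l y) * ρ a y) x

/-- Equivalence of configuration-indexed currents relative to the extended system. -/
def EquivCurrentsExt {D : ℕ} {ι γ κ : Type} [Fintype ι] [Fintype γ] (m : ℕ) (Ω : Set (Ed D))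
    (F : κ → PJet ι γ m D → ℝ)
    (C1 C2 : (ι → Ed D → ℝ) → (γ → Ed D → ℝ) → Fin (D + 1) → Ed D → ℝ) : Prop :=
  ∃ (m' : ℕ) (Jb Jh : Fin (D + 1) → Ed D × Jet (ι ⊕ γ) m' D → ℝ),
    (∀ μ, ContDiff ℝ (⊤ : ℕ∞) (Jb μ)) ∧ (∀ μ, ContDiff ℝ (⊤ : ℕ∞) (Jh μ)) ∧
    (∀ u g, SmoothFields Ω u → SmoothFields Ω g → ∀ μ, ∀ x ∈ Ω,
      C1 u g μ x - C2 u g μ x =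
        realize m' (Jb μ) (Sum.elim u g) x + realize m' (Jh μ) (Sum.elim u g) x) ∧
    (∀ u g, SmoothFields Ω u → SmoothFields Ω g → ∀ x ∈ Ω,
      Dvg (fun μ => realize m' (Jb μ) (Sum.elim u g)) x = 0) ∧
    (∀ u g, ExtSol m Ω F u g → ∀ μ, ∀ x ∈ Ω, realize m' (Jh μ) (Sum.elim u g) x = 0)

/-- The auxiliary Lagrangian Ľ = F^aρ_a + (∂_μ g_l)ϑ^{μl} of an extended system,
as a local function of the combined fields ((u, g), (ρ, ϑ)). -/
noncomputable def Lcheck {D : ℕ} {ι γ κ : Type} [Fintype κ] [Fintype γ] {m : ℕ} (hm : 0 < m)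
    (F : κ → PJet ι γ m D → ℝ) :
    Ed D × Jet ((ι ⊕ γ) ⊕ (κ ⊕ Fin (D + 1) × γ)) m D → ℝ :=
  fun p =>
    (∑ a, F a (p.1, fun c => p.2 (Sum.inl (Sum.inl c.1), c.2),
        fun l => p.2 (Sum.inl (Sum.inr l), zeroIdx)) * p.2 (Sum.inr (Sum.inl a), zeroIdx)) +
    ∑ μ, ∑ l, p.2 (Sum.inl (Sum.inr l), oneIdx hm μ) * p.2 (Sum.inr (Sum.inr (μ, l)), zeroIdx)

/-! Since `L̂ = F^a ρ_a` contains the `ρ_a` only undifferentiated and linearly, its variation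
is `δL̂ = (δF^a) ρ_a + F^a δρ_a`: the first term vanishes on solutions because `δu` is a
symmetry, the second because `F^a = 0` there. For the same reason the coefficients
`∂L̂/∂(∂_β ρ_a)` vanish for `β ≠ 0`, so `δρ` does not enter the boundary current, and
`∂L̂/∂(∂_β u_i) = (∂F^a/∂(∂_β u_i)) ρ_a` turns the remaining part into `j_{(Fρ)}`. -/

section AuxiliaryLagrangian

variable {D m : ℕ} {ι κ : Type}

lemma pds_zero (l : List (Fin (D + 1))) : pds l (fun _ => (0 : ℝ)) = fun _ => 0 := by
  induction l with
  | nil => rfl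
  | cons μ l ih => funext x; simp [pds, ih, pd]

lemma pds_zeroIdx (f : Ed D → ℝ) : pds (zeroIdx : MIdx m D).toList f = f := rfl

lemma jet_zeroIdx (u : ι → Ed D → ℝ) (i : ι) (x : Ed D) :
    jet m u x (i, zeroIdx) = u i x := rfl

lemma uPartJet_jet_sum_elim (u : ι → Ed D → ℝ) (ρ : κ → Ed D → ℝ) (x : Ed D) :
    uPartJet (jet m (Sum.elim u ρ) x) = jet m u x := rfl

lemma bdryG_sum_elim {A B : Type} [Fintype A] [Fintype B]
    (G : (A ⊕ B) × MIdx m D → Ed D → ℝ) (ε₁ : A → Ed D → ℝ) (ε₂ : B → Ed D → ℝ)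
    (μ : Fin (D + 1)) (x : Ed D) :
    bdryG m G (Sum.elim ε₁ ε₂) μ x =
      bdryG m (fun c => G (Sum.inl c.1, c.2)) ε₁ μ x +
        bdryG m (fun c => G (Sum.inr c.1, c.2)) ε₂ μ x :=
  Fintype.sum_sum_type _

lemma bdryG_eq_zero {A : Type} [Fintype A] (G : A × MIdx m D → Ed D → ℝ)
    (hG : ∀ a β, β ≠ zeroIdx → G (a, β) = fun _ => 0) (ε : A → Ed D → ℝ)
    (μ : Fin (D + 1)) (x : Ed D) : bdryG m G ε μ x = 0 := by
  refine Finset.sum_eq_zero fun a _ => Finset.sum_eq_zero fun k _ =>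
    Finset.sum_eq_zero fun lam _ => Finset.sum_eq_zero fun j _ => ?_
  have hpos : (⟨⟨(k : ℕ) + 1, Nat.succ_lt_succ k.isLt⟩, Fin.cons μ lam⟩ : MIdx m D) ≠ zeroIdx :=
    fun h => Nat.succ_ne_zero _ (congrArg (fun β : MIdx m D => (β.1 : ℕ)) h)
  simp [hG a _ hpos, pds_zero]

noncomputable def uPartCLM (D m : ℕ) (ι κ : Type) :
    Ed D × Jet (ι ⊕ κ) m D →L[ℝ] Ed D × Jet ι m D :=
  (ContinuousLinearMap.fst ℝ _ _).prod
    ((ContinuousLinearMap.pi fun c => ContinuousLinearMap.proj (Sum.inl c.1, c.2)).comp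
      (ContinuousLinearMap.snd ℝ _ _))

lemma uPartCLM_apply (p : Ed D × Jet (ι ⊕ κ) m D) :
    uPartCLM D m ι κ p = (p.1, uPartJet p.2) := rfl

noncomputable def jetCoordCLM (D m : ℕ) (ι : Type) (c : ι × MIdx m D) :
    Ed D × Jet ι m D →L[ℝ] ℝ :=
  (ContinuousLinearMap.proj c).comp (ContinuousLinearMap.snd ℝ _ _)

variable [Fintype ι] [Fintype κ]

lemma hasFDerivAt_Lhat {F : κ → Ed D × Jet ι m D → ℝ}
    (hF : ∀ a, Differentiable ℝ (F a)) (p : Ed D × Jet (ι ⊕ κ) m D) :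
    HasFDerivAt (Lhat F)
      (∑ a, (F a (uPartCLM D m ι κ p) • jetCoordCLM D m (ι ⊕ κ) (Sum.inr a, zeroIdx) +
        p.2 (Sum.inr a, zeroIdx) •
          (fderiv ℝ (F a) (uPartCLM D m ι κ p)).comp (uPartCLM D m ι κ))) p :=
  HasFDerivAt.fun_sum fun a _ =>
    ((hF a _).hasFDerivAt.comp p (uPartCLM D m ι κ).hasFDerivAt).mul
      (jetCoordCLM D m (ι ⊕ κ) _).hasFDerivAt

variable [DecidableEq ι] [DecidableEq κ]

lemma jpd_Lhat {F : κ → Ed D × Jet ι m D → ℝ} (hF : ∀ a, Differentiable ℝ (F a))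
    (c : (ι ⊕ κ) × MIdx m D) (p : Ed D × Jet (ι ⊕ κ) m D) :
    jpd (Lhat F) c p =
      ∑ a, (F a (p.1, uPartJet p.2) * (Pi.single c 1 : Jet (ι ⊕ κ) m D) (Sum.inr a, zeroIdx) +
        p.2 (Sum.inr a, zeroIdx) *
          fderiv ℝ (F a) (p.1, uPartJet p.2) (0, uPartJet (Pi.single c 1))) := by
  simp only [jpd, (hasFDerivAt_Lhat hF p).fderiv, sum_apply, add_apply, smul_apply,
    ContinuousLinearMap.comp_apply, uPartCLM_apply, smul_eq_mul]
  rfl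

lemma jpd_Lhat_inl {F : κ → Ed D × Jet ι m D → ℝ} (hF : ∀ a, Differentiable ℝ (F a))
    (i : ι) (β : MIdx m D) (p : Ed D × Jet (ι ⊕ κ) m D) :
    jpd (Lhat F) (Sum.inl i, β) p =
      ∑ a, jpd (F a) (i, β) (p.1, uPartJet p.2) * p.2 (Sum.inr a, zeroIdx) := by
  have hu : uPartJet (Pi.single ((Sum.inl i : ι ⊕ κ), β) (1 : ℝ)) = Pi.single (i, β) 1 := by
    funext c
    simp only [uPartJet, Pi.single_apply, Prod.ext_iff, Sum.inl.injEq]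
  rw [jpd_Lhat hF]
  simp [hu, jpd, mul_comm]

lemma jpd_Lhat_inr {F : κ → Ed D × Jet ι m D → ℝ} (hF : ∀ a, Differentiable ℝ (F a))
    (b : κ) (β : MIdx m D) (p : Ed D × Jet (ι ⊕ κ) m D) :
    jpd (Lhat F) (Sum.inr b, β) p = if β = zeroIdx then F b (p.1, uPartJet p.2) else 0 := by
  have hu : uPartJet (Pi.single ((Sum.inr b : ι ⊕ κ), β) (1 : ℝ)) = 0 := by
    funext c
    simp [uPartJet]
  by_cases hβ : β = zeroIdx
  · subst hβ
    simp [jpd_Lhat hF, hu, Prod.mk_zero_zero, Pi.single_apply]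
  · simp [jpd_Lhat hF, hu, Prod.mk_zero_zero, Prod.ext_iff, Ne.symm hβ, hβ]

lemma variation_Lhat {F : κ → Ed D × Jet ι m D → ℝ} (hF : ∀ a, Differentiable ℝ (F a))
    (u v : ι → Ed D → ℝ) (ρ w : κ → Ed D → ℝ) (x : Ed D) :
    variation m (Lhat F) (Sum.elim u ρ) (Sum.elim v w) x =
      ∑ a, (variation m (F a) u v x * ρ a x + F a (x, jet m u x) * w a x) := by
  rw [variation, ← (Equiv.sumProdDistrib ι κ (MIdx m D)).symm.sum_comp, Fintype.sum_sum_type,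
    Finset.sum_add_distrib]
  simp only [Equiv.sumProdDistrib_symm_apply_left, Equiv.sumProdDistrib_symm_apply_right,
    jpd_Lhat_inl hF, jpd_Lhat_inr hF, uPartJet_jet_sum_elim, jet_zeroIdx, Sum.elim_inl,
    Sum.elim_inr]
  congr 1
  · simp only [variation, Finset.sum_mul]
    rw [Finset.sum_comm]
    exact Finset.sum_congr rfl fun a _ => Finset.sum_congr rfl fun c _ => mul_right_comm _ _ _
  · rw [Fintype.sum_prod_type]
    simp [ite_mul, pds_zeroIdx]

lemma lfBdry_Lhat {F : κ → Ed D × Jet ι m D → ℝ} (hF : ∀ a, Differentiable ℝ (F a))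
    (u v : ι → Ed D → ℝ) (ρ w : κ → Ed D → ℝ) (μ : Fin (D + 1)) (x : Ed D) :
    lfBdry m (Lhat F) (Sum.elim u ρ) (Sum.elim v w) μ x = jFrho m F u ρ v μ x := by
  rw [lfBdry, bdryG_sum_elim, add_eq_left.mpr (bdryG_eq_zero _
    (fun b β hβ => funext fun y => by rw [jpd_Lhat_inr hF, if_neg hβ]) w μ x)]
  simp only [jpd_Lhat_inl hF, uPartJet_jet_sum_elim, jet_zeroIdx, Sum.elim_inr]
  rfl

end AuxiliaryLagrangian

theorem statement2_general (D N M m : ℕ) (Ω : Set (Ed D))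
    (F : Fin M → Ed D × Jet (Fin N) m D → ℝ) (hF : ∀ a, ContDiff ℝ (⊤ : ℕ∞) (F a))
    (δu : Fin N → Ed D × Jet (Fin N) m D → ℝ)
    (hsym : IsSymmetry m Ω F δu)
    (δρ : Fin M → Ed D × Jet (Fin N ⊕ Fin M) m D → ℝ) :
    -- {δu, δρ} is an on-shell symmetry of L̂ with K^μ = 0:
    (∀ (u : Fin N → Ed D → ℝ) (ρ : Fin M → Ed D → ℝ),
      SmoothFields Ω u → SmoothFields Ω ρ →
      (∀ a, ∀ x ∈ Ω, realize m (F a) u x = 0) →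
      (∀ i, ∀ x ∈ Ω, adjointOp m F u ρ i x = 0) →
      ∀ x ∈ Ω,
        variation m (Lhat F) (Sum.elim u ρ)
          (Sum.elim (fun i => realize m (δu i) u)
            (fun a => realize m (δρ a) (Sum.elim u ρ))) x = 0) ∧
    -- The Noether current (K^μ = 0) equals j^μ_{(Fρ)}, which is independent of δρ:
    (∀ (u : Fin N → Ed D → ℝ) (ρ : Fin M → Ed D → ℝ),
      SmoothFields Ω u → SmoothFields Ω ρ → ∀ μ, ∀ x ∈ Ω,
      lfBdry m (Lhat F) (Sum.elim u ρ)
        (Sum.elim (fun i => realize m (δu i) u)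
          (fun a => realize m (δρ a) (Sum.elim u ρ))) μ x
        = jFrho m F u ρ (fun i => realize m (δu i) u) μ x) := by
  have hFd : ∀ a, Differentiable ℝ (F a) := fun a => (hF a).differentiable (by simp)
  refine ⟨fun u ρ hu _ hsol _ x hx => ?_, fun u ρ _ _ μ x _ => lfBdry_Lhat hFd u _ ρ _ μ x⟩
  rw [variation_Lhat hFd]
  refine Finset.sum_eq_zero fun a _ => ?_
  rw [hsym u ⟨hu, hsol⟩ a x hx, show F a (x, jet m u x) = 0 from hsol a x hx]
  ring

/-- If δu is a symmetry characteristic of F = 0 and δρ is arbitrary, then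
{δu, δρ} is an on-shell symmetry of L̂ = F^aρ_a with K^μ = 0, and the corresponding
Noether current of the system F^a = 0, E^i(L̂) = 0 equals j^μ_{(Fρ)}, independently of δρ. -/
theorem statement2 (D N M m : ℕ) (Ω : Set (Ed D)) (hΩ : IsOpen Ω)
    (F : Fin M → Ed D × Jet (Fin N) m D → ℝ) (hF : ∀ a, ContDiff ℝ (⊤ : ℕ∞) (F a))
    (δu : Fin N → Ed D × Jet (Fin N) m D → ℝ) (hδu : ∀ i, ContDiff ℝ (⊤ : ℕ∞) (δu i))
    (hsym : IsSymmetry m Ω F δu)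
    (δρ : Fin M → Ed D × Jet (Fin N ⊕ Fin M) m D → ℝ)
    (hδρ : ∀ a, ContDiff ℝ (⊤ : ℕ∞) (δρ a)) :
    -- {δu, δρ} is an on-shell symmetry of L̂ with K^μ = 0:
    (∀ (u : Fin N → Ed D → ℝ) (ρ : Fin M → Ed D → ℝ),
      SmoothFields Ω u → SmoothFields Ω ρ →
      (∀ a, ∀ x ∈ Ω, realize m (F a) u x = 0) →
      (∀ i, ∀ x ∈ Ω, adjointOp m F u ρ i x = 0) →
      ∀ x ∈ Ω,
        variation m (Lhat F) (Sum.elim u ρ)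
          (Sum.elim (fun i => realize m (δu i) u)
            (fun a => realize m (δρ a) (Sum.elim u ρ))) x = 0) ∧
    -- The Noether current (K^μ = 0) equals j^μ_{(Fρ)}, which is independent of δρ:
    (∀ (u : Fin N → Ed D → ℝ) (ρ : Fin M → Ed D → ℝ),
      SmoothFields Ω u → SmoothFields Ω ρ → ∀ μ, ∀ x ∈ Ω,
      lfBdry m (Lhat F) (Sum.elim u ρ)
        (Sum.elim (fun i => realize m (δu i) u)
          (fun a => realize m (δρ a) (Sum.elim u ρ))) μ x
        = jFrho m F u ρ (fun i => realize m (δu i) u) μ x) :=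
  statement2_general D N M m Ω F hF δu hsym δρ

end Paper
end

section
/- If q_a[u,g] is a parameterized conservation law multiplier for F^a[u,g] and the parameterized conserved current J^μ[u,g], then F^a q_a + (∂J^μ/∂g_l)·∂_μ g_l = D_μ J^μ holds for every smooth u and every smooth (not necessarily constant) g; consequently the pair {q_a, ∂J^μ/∂g_l} is a conservation law multiplier for the extended system F^a[u,g] = 0, ∂_μ g_l = 0, with the same current J^μ[u,g]. -/
namespace Paper

/-! By the chain rule, `∂_μ (J[u, g])` at `x` is the derivative of `J[u, c]` with the parameters
frozen at `c = g(x)`, plus `(∂J/∂g_l)·∂_μ g_l`. Summing over `μ`, the frozen part is the divergence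
that the parameterized multiplier identity at the constant `c` equates to `F^a q_a`. -/

section ChainRule

variable {E F G γ : Type*} [NormedAddCommGroup E] [NormedSpace ℝ E]
  [NormedAddCommGroup F] [NormedSpace ℝ F] [NormedAddCommGroup G] [NormedSpace ℝ G]
  [Fintype γ] [DecidableEq γ]

theorem fderiv_comp_params_apply {f : E × F × (γ → ℝ) → G} {b : E → F} {g : γ → E → ℝ}
    {x : E} (hf : DifferentiableAt ℝ f (x, b x, fun l => g l x)) (hb : DifferentiableAt ℝ b x)
    (hg : ∀ l, DifferentiableAt ℝ (g l) x) (v : E) :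
    fderiv ℝ (fun y => f (y, b y, fun l => g l y)) x v =
      fderiv ℝ (fun y => f (y, b y, fun l => g l x)) x v +
        ∑ l, fderiv ℝ (g l) x v • fderiv ℝ f (x, b x, fun l => g l x) (0, 0, Pi.single l 1) := by
  have hparams : HasFDerivAt (fun y l => g l y)
      (ContinuousLinearMap.pi fun l => fderiv ℝ (g l) x) x :=
    hasFDerivAt_pi.2 fun l => (hg l).hasFDerivAt
  have hmoving : HasFDerivAt (fun y => f (y, b y, fun l => g l y)) _ x := hf.hasFDerivAt.comp x
    ((hasFDerivAt_id x).prodMk (hb.hasFDerivAt.prodMk hparams))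
  have hfrozen : HasFDerivAt (fun y => f (y, b y, fun l => g l x)) _ x := hf.hasFDerivAt.comp x
    ((hasFDerivAt_id x).prodMk (hb.hasFDerivAt.prodMk (hasFDerivAt_const (fun l => g l x) x)))
  rw [hmoving.fderiv, hfrozen.fderiv]
  set L := fderiv ℝ f (x, b x, fun l => g l x)
  have hdecomp : ((v, fderiv ℝ b x v, fun l => fderiv ℝ (g l) x v) : E × F × (γ → ℝ)) =
      (v, fderiv ℝ b x v, 0) +
        ∑ l, fderiv ℝ (g l) x v • ((0, 0, Pi.single l 1) : E × F × (γ → ℝ)) := by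
    simp only [Prod.ext_iff, Prod.fst_add, Prod.snd_add, Prod.fst_sum, Prod.snd_sum,
      Prod.smul_fst, Prod.smul_snd, smul_zero, Finset.sum_const_zero, add_zero, zero_add, true_and]
    exact pi_eq_sum_univ' _
  calc L (v, fderiv ℝ b x v, fun l => fderiv ℝ (g l) x v) = _ := by rw [hdecomp]
    _ = _ := by rw [map_add, map_sum]; simp only [map_smul]; rfl

end ChainRule

theorem contDiffOn_pds {D : ℕ} {Ω : Set (Ed D)} (hΩ : IsOpen Ω) (l : List (Fin (D + 1)))
    {f : Ed D → ℝ} (hf : ContDiffOn ℝ (⊤ : ℕ∞) f Ω) : ContDiffOn ℝ (⊤ : ℕ∞) (pds l f) Ω := by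
  induction l with
  | nil => exact hf
  | cons μ l ih =>
    exact (ih.fderiv_of_isOpen hΩ (by exact_mod_cast le_top)).clm_apply contDiffOn_const

theorem differentiableAt_jet {D : ℕ} {ι : Type} [Fintype ι] {Ω : Set (Ed D)} (hΩ : IsOpen Ω)
    (m : ℕ) {u : ι → Ed D → ℝ} (hu : SmoothFields Ω u) {x : Ed D} (hx : x ∈ Ω) :
    DifferentiableAt ℝ (jet m u) x :=
  differentiableAt_pi.2 fun c =>
    ((contDiffOn_pds hΩ _ (hu c.1)).contDiffAt (hΩ.mem_nhds hx)).differentiableAt (by simp)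

theorem pd_realizeP {D : ℕ} {ι γ : Type} [Fintype ι] [Fintype γ] [DecidableEq γ]
    {Ω : Set (Ed D)} (hΩ : IsOpen Ω) {m : ℕ} {f : PJet ι γ m D → ℝ} (hf : Differentiable ℝ f)
    {u : ι → Ed D → ℝ} {g : γ → Ed D → ℝ} (hu : SmoothFields Ω u) (hg : SmoothFields Ω g)
    (μ : Fin (D + 1)) {x : Ed D} (hx : x ∈ Ω) :
    pd μ (realizeP m f u g) x =
      pd μ (fun y => f (y, jet m u y, fun l => g l x)) x +
        ∑ l, pd μ (g l) x * gpd f l (x, jet m u x, fun l => g l x) :=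
  fderiv_comp_params_apply (hf _) (differentiableAt_jet hΩ m hu hx)
    (fun l => ((hg l).contDiffAt (hΩ.mem_nhds hx)).differentiableAt (by simp)) _

theorem statement10_general (D N P M m : ℕ) (Ω : Set (Ed D)) (hΩ : IsOpen Ω)
    (F : Fin M → PJet (Fin N) (Fin P) m D → ℝ)
    (q : Fin M → PJet (Fin N) (Fin P) m D → ℝ)
    (J : Fin (D + 1) → PJet (Fin N) (Fin P) m D → ℝ) (hJ : ∀ μ, ContDiff ℝ (⊤ : ℕ∞) (J μ))
    (hpm : ParamMultiplier m Ω F q J) :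
    ExtMultiplier m Ω F q (fun μ l => gpd (J μ) l) J := by
  intro u g hu hg x hx
  have hsplit μ := pd_realizeP hΩ ((hJ μ).differentiable (by simp)) hu hg μ hx
  calc _ = Dvg (fun μ y => J μ (y, jet m u y, fun l => g l x)) x +
        ∑ μ, ∑ l, pd μ (g l) x * gpd (J μ) l (x, jet m u x, fun l => g l x) := by
        rw [← hpm u hu (fun l => g l x) x hx]; rfl
    _ = _ := by simp only [Dvg, hsplit, Finset.sum_add_distrib]

/-- A parameterized multiplier q for F, J yields the multiplier
{q_a, ∂J^μ/∂g_l} of the extended system F = 0, ∂_μ g_l = 0, with the same current J. -/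
theorem statement10 (D N P M m : ℕ) (Ω : Set (Ed D)) (hΩ : IsOpen Ω)
    (F : Fin M → PJet (Fin N) (Fin P) m D → ℝ) (hF : ∀ a, ContDiff ℝ (⊤ : ℕ∞) (F a))
    (q : Fin M → PJet (Fin N) (Fin P) m D → ℝ) (hq : ∀ a, ContDiff ℝ (⊤ : ℕ∞) (q a))
    (J : Fin (D + 1) → PJet (Fin N) (Fin P) m D → ℝ) (hJ : ∀ μ, ContDiff ℝ (⊤ : ℕ∞) (J μ))
    (hpm : ParamMultiplier m Ω F q J) :
    ExtMultiplier m Ω F q (fun μ l => gpd (J μ) l) J :=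
  statement10_general D N P M m Ω hΩ F q J hJ hpm

end Paper
end

section
/- Let {q̃_a[u,g], θ^{μl}[u,g]} be a conservation law multiplier for the extended system F^a[u,g] = 0, ∂_μ g_l = 0 and for the current J̃^μ[u,g] (where q̃_a, θ^{μl}, J̃^μ may depend on derivatives of g_l). Then q_a(x,u,∂u,…,g) := q̃_a(x,u,∂u,…,g,0,0,…), obtained by setting all derivatives of g to zero, is a parameterized conservation law multiplier for F^a[u,g] and for the current J^μ(x,u,∂u,…,g) := J̃^μ(x,u,∂u,…,g,0,0,…). -/
namespace Paper

lemma pd_const {D : ℕ} (μ : Fin (D + 1)) (r : ℝ) : pd μ (fun _ : Ed D => r) = 0 := by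
  funext x
  simp [pd]

lemma pds_const {D : ℕ} (l : List (Fin (D + 1))) (r : ℝ) :
    pds l (fun _ : Ed D => r) = fun _ => if l = [] then r else 0 := by
  induction l with
  | nil => rfl
  | cons μ t ih =>
    simp only [pds, ih, reduceCtorEq, if_false]
    exact pd_const μ _

lemma MIdx.toList_eq_nil_iff {m D : ℕ} (β : MIdx m D) : β.toList = [] ↔ (β.1 : ℕ) = 0 := by
  simp [MIdx.toList]

lemma realize_sumElim_const {D : ℕ} {ι γ : Type} (m : ℕ) (f : Ed D × Jet (ι ⊕ γ) m D → ℝ)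
    (u : ι → Ed D → ℝ) (c : γ → ℝ) :
    realize m f (Sum.elim u fun l _ => c l) = fun x => dropGDerivs f (x, jet m u x, c) := by
  funext x
  refine congrArg (fun z => f (x, z)) (funext fun ⟨s, β⟩ => ?_)
  cases s with
  | inl i => rfl
  | inr l => simp [jet, pds_const, MIdx.toList_eq_nil_iff]

theorem statement12_general (D N P M m : ℕ) (Ω : Set (Ed D))
    (F : Fin M → PJet (Fin N) (Fin P) m D → ℝ)
    (qt : Fin M → Ed D × Jet (Fin N ⊕ Fin P) m D → ℝ)
    (θt : Fin (D + 1) → Fin P → Ed D × Jet (Fin N ⊕ Fin P) m D → ℝ)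
    (Jt : Fin (D + 1) → Ed D × Jet (Fin N ⊕ Fin P) m D → ℝ)
    (hmult : ∀ u g, SmoothFields Ω u → SmoothFields Ω g → ∀ x ∈ Ω,
      ((∑ a, realizeP m (F a) u g x * realize m (qt a) (Sum.elim u g) x) +
        ∑ μ, ∑ l, pd μ (g l) x * realize m (θt μ l) (Sum.elim u g) x) =
      Dvg (fun μ => realize m (Jt μ) (Sum.elim u g)) x) :
    ParamMultiplier m Ω F (fun a => dropGDerivs (qt a)) (fun μ => dropGDerivs (Jt μ)) := by
  intro u hu c x hx
  have h := hmult u (fun l _ => c l) hu (fun _ => contDiffOn_const) x hx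
  simpa only [pd_const, Pi.zero_apply, zero_mul, Finset.sum_const_zero, add_zero,
    realize_sumElim_const, realizeP] using h

/-- Setting the derivatives of g to zero in a multiplier of the extended
system yields a parameterized multiplier of F with the correspondingly truncated current. -/
theorem statement12 (D N P M m : ℕ) (Ω : Set (Ed D)) (hΩ : IsOpen Ω)
    (F : Fin M → PJet (Fin N) (Fin P) m D → ℝ) (hF : ∀ a, ContDiff ℝ (⊤ : ℕ∞) (F a))
    (qt : Fin M → Ed D × Jet (Fin N ⊕ Fin P) m D → ℝ)
    (hqt : ∀ a, ContDiff ℝ (⊤ : ℕ∞) (qt a))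
    (θt : Fin (D + 1) → Fin P → Ed D × Jet (Fin N ⊕ Fin P) m D → ℝ)
    (hθt : ∀ μ l, ContDiff ℝ (⊤ : ℕ∞) (θt μ l))
    (Jt : Fin (D + 1) → Ed D × Jet (Fin N ⊕ Fin P) m D → ℝ)
    (hJt : ∀ μ, ContDiff ℝ (⊤ : ℕ∞) (Jt μ))
    (hmult : ∀ u g, SmoothFields Ω u → SmoothFields Ω g → ∀ x ∈ Ω,
      ((∑ a, realizeP m (F a) u g x * realize m (qt a) (Sum.elim u g) x) +
        ∑ μ, ∑ l, pd μ (g l) x * realize m (θt μ l) (Sum.elim u g) x) =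
      Dvg (fun μ => realize m (Jt μ) (Sum.elim u g)) x) :
    ParamMultiplier m Ω F (fun a => dropGDerivs (qt a)) (fun μ => dropGDerivs (Jt μ)) :=
  statement12_general D N P M m Ω F qt θt Jt hmult

end Paper
end

section
/- Let {q_a[u,g], θ₁^{μl}[u,g]} and {q_a[u,g], θ₂^{μl}[u,g]}, where q_a, θ₁^{μl}, θ₂^{μl} do not depend on the derivatives of g_l, both be conservation law multipliers for the extended system F^a[u,g] = 0, ∂_μ g_l = 0, with currents J₁^μ[u,g] and J₂^μ[u,g] respectively, and suppose J₁^μ − J₂^μ is identically conserved. Then θ₁^{μl} = θ₂^{μl}. -/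
namespace Paper

/-!
Fix u, g, a point x₀ and indices (μ₀, l₀). Replace g by the affine field g' with
g'(x₀) = g(x₀) and ∂_μ g'_l = δ_{μμ₀} δ_{ll₀}. Subtracting the two multiplier identities for
(u, g') at x₀, the terms F^a q_a cancel and the difference of the divergences vanishes, leaving
θ₁^{μ₀l₀} = θ₂^{μ₀l₀} at (u, g'). Since θ sees g only through its value at x₀, this is the
claim at (u, g).
-/

section Smoothness

variable {D : ℕ} {Ω : Set (Ed D)}

lemma pd_contDiffOn (hΩ : IsOpen Ω) {f : Ed D → ℝ} (hf : ContDiffOn ℝ (⊤ : ℕ∞) f Ω)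
    (μ : Fin (D + 1)) : ContDiffOn ℝ (⊤ : ℕ∞) (pd μ f) Ω :=
  (hf.fderiv_of_isOpen hΩ (by exact_mod_cast le_top)).clm_apply contDiffOn_const

lemma pds_contDiffOn (hΩ : IsOpen Ω) {f : Ed D → ℝ} (hf : ContDiffOn ℝ (⊤ : ℕ∞) f Ω)
    (L : List (Fin (D + 1))) : ContDiffOn ℝ (⊤ : ℕ∞) (pds L f) Ω := by
  induction L with
  | nil => exact hf
  | cons μ L ih => exact pd_contDiffOn hΩ ih μ

lemma jet_differentiableAt {ι : Type} [Fintype ι] {m : ℕ} {u : ι → Ed D → ℝ}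
    (hΩ : IsOpen Ω) (hu : SmoothFields Ω u) {x : Ed D} (hx : x ∈ Ω) :
    DifferentiableAt ℝ (jet m u) x :=
  differentiableAt_pi.2 fun c =>
    ((pds_contDiffOn hΩ (hu c.1) _).contDiffAt (hΩ.mem_nhds hx)).differentiableAt (by simp)

lemma realizeP_differentiableAt {ι γ : Type} [Fintype ι] [Fintype γ] {m : ℕ}
    {f : PJet ι γ m D → ℝ} (hf : ContDiff ℝ (⊤ : ℕ∞) f) {u : ι → Ed D → ℝ}
    {g : γ → Ed D → ℝ} (hΩ : IsOpen Ω) (hu : SmoothFields Ω u) (hg : SmoothFields Ω g)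
    {x : Ed D} (hx : x ∈ Ω) : DifferentiableAt ℝ (realizeP m f u g) x :=
  (hf.differentiable (by simp) _).comp x <| differentiableAt_id.prodMk <|
    (jet_differentiableAt hΩ hu hx).prodMk <|
      differentiableAt_pi.2 fun l => ((hg l).contDiffAt (hΩ.mem_nhds hx)).differentiableAt (by simp)

end Smoothness

lemma Dvg_sub {D : ℕ} {f h : Fin (D + 1) → Ed D → ℝ} {x : Ed D}
    (hf : ∀ μ, DifferentiableAt ℝ (f μ) x) (hh : ∀ μ, DifferentiableAt ℝ (h μ) x) :
    Dvg (fun μ y => f μ y - h μ y) x = Dvg f x - Dvg h x := by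
  simp only [Dvg, pd, ← Finset.sum_sub_distrib]
  refine Finset.sum_congr rfl fun μ _ => ?_
  rw [fderiv_fun_sub (hf μ) (hh μ)]
  rfl

lemma ExtMultiplier.sum_pd_mul_eq {D : ℕ} {ι γ κ : Type} [Fintype ι] [Fintype γ]
    [Fintype κ] {m : ℕ} {Ω : Set (Ed D)} (hΩ : IsOpen Ω) {F q : κ → PJet ι γ m D → ℝ}
    {θ₁ θ₂ : Fin (D + 1) → γ → PJet ι γ m D → ℝ} {J₁ J₂ : Fin (D + 1) → PJet ι γ m D → ℝ}
    (hJ₁ : ∀ μ, ContDiff ℝ (⊤ : ℕ∞) (J₁ μ)) (hJ₂ : ∀ μ, ContDiff ℝ (⊤ : ℕ∞) (J₂ μ))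
    (hm₁ : ExtMultiplier m Ω F q θ₁ J₁) (hm₂ : ExtMultiplier m Ω F q θ₂ J₂)
    (hJ : ∀ u g, SmoothFields Ω u → SmoothFields Ω g → ∀ x ∈ Ω,
      Dvg (fun μ y => realizeP m (J₁ μ) u g y - realizeP m (J₂ μ) u g y) x = 0)
    {u : ι → Ed D → ℝ} {g : γ → Ed D → ℝ} (hu : SmoothFields Ω u) (hg : SmoothFields Ω g)
    {x : Ed D} (hx : x ∈ Ω) :
    ∑ μ, ∑ l, pd μ (g l) x * realizeP m (θ₁ μ l) u g x =
      ∑ μ, ∑ l, pd μ (g l) x * realizeP m (θ₂ μ l) u g x := by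
  have hdiv := hJ u g hu hg x hx
  rw [Dvg_sub (fun μ => realizeP_differentiableAt (hJ₁ μ) hΩ hu hg hx)
    (fun μ => realizeP_differentiableAt (hJ₂ μ) hΩ hu hg hx), ← hm₁ u g hu hg x hx,
    ← hm₂ u g hu hg x hx] at hdiv
  linarith

section AffineField

variable {D : ℕ} {γ : Type} [DecidableEq γ]

def affineField (c : γ → ℝ) (x₀ : Ed D) (μ₀ : Fin (D + 1)) (l₀ : γ) : γ → Ed D → ℝ :=
  fun l y => c l + if l = l₀ then y μ₀ - x₀ μ₀ else 0

variable (c : γ → ℝ) (x₀ : Ed D) (μ₀ : Fin (D + 1)) (l₀ : γ)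

lemma affineField_apply_self (l : γ) : affineField c x₀ μ₀ l₀ l x₀ = c l := by
  simp [affineField]

lemma hasFDerivAt_affineField (l : γ) (x : Ed D) :
    HasFDerivAt (affineField c x₀ μ₀ l₀ l)
      (if l = l₀ then (ContinuousLinearMap.proj μ₀ : Ed D →L[ℝ] ℝ) else 0) x := by
  unfold affineField
  split_ifs
  · exact (((ContinuousLinearMap.proj μ₀ : Ed D →L[ℝ] ℝ).hasFDerivAt).sub_const _).const_add _
  · simpa using hasFDerivAt_const (c l) x

lemma smoothFields_affineField (Ω : Set (Ed D)) : SmoothFields Ω (affineField c x₀ μ₀ l₀) :=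
  fun l => ContDiff.contDiffOn <| contDiff_const.add <| by
    split_ifs
    · exact (ContinuousLinearMap.proj μ₀ : Ed D →L[ℝ] ℝ).contDiff.sub contDiff_const
    · exact contDiff_const

lemma pd_affineField (μ : Fin (D + 1)) (l : γ) (x : Ed D) :
    pd μ (affineField c x₀ μ₀ l₀ l) x = if μ = μ₀ ∧ l = l₀ then 1 else 0 := by
  rw [pd, (hasFDerivAt_affineField c x₀ μ₀ l₀ l x).fderiv]
  by_cases hl : l = l₀ <;> by_cases hμ : μ = μ₀ <;> simp [hl, hμ]

lemma sum_pd_affineField_mul [Fintype γ] (f : Fin (D + 1) → γ → ℝ) (x : Ed D) :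
    ∑ μ, ∑ l, pd μ (affineField c x₀ μ₀ l₀ l) x * f μ l = f μ₀ l₀ := by
  simp only [pd_affineField, ite_mul, one_mul, zero_mul, ite_and, Finset.sum_ite_irrel,
    Finset.sum_ite_eq', Finset.mem_univ, if_true, Finset.sum_const_zero]

end AffineField

theorem statement13_general (D N P M m : ℕ) (Ω : Set (Ed D)) (hΩ : IsOpen Ω)
    (F : Fin M → PJet (Fin N) (Fin P) m D → ℝ)
    (q : Fin M → PJet (Fin N) (Fin P) m D → ℝ)
    (θ₁ θ₂ : Fin (D + 1) → Fin P → PJet (Fin N) (Fin P) m D → ℝ)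
    (J₁ J₂ : Fin (D + 1) → PJet (Fin N) (Fin P) m D → ℝ)
    (hJ₁ : ∀ μ, ContDiff ℝ (⊤ : ℕ∞) (J₁ μ)) (hJ₂ : ∀ μ, ContDiff ℝ (⊤ : ℕ∞) (J₂ μ))
    (hm₁ : ExtMultiplier m Ω F q θ₁ J₁) (hm₂ : ExtMultiplier m Ω F q θ₂ J₂)
    (hJ : ∀ u g, SmoothFields Ω u → SmoothFields Ω g → ∀ x ∈ Ω,
      Dvg (fun μ y => realizeP m (J₁ μ) u g y - realizeP m (J₂ μ) u g y) x = 0) :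
    ∀ u g, SmoothFields Ω u → SmoothFields Ω g → ∀ μ l, ∀ x ∈ Ω,
      realizeP m (θ₁ μ l) u g x = realizeP m (θ₂ μ l) u g x := by
  intro u g hu _ μ₀ l₀ x₀ hx₀
  have hθ := ExtMultiplier.sum_pd_mul_eq hΩ hJ₁ hJ₂ hm₁ hm₂ hJ hu
    (smoothFields_affineField (fun l => g l x₀) x₀ μ₀ l₀ Ω) hx₀
  simpa only [sum_pd_affineField_mul, realizeP, affineField_apply_self] using hθ

/-- Uniqueness of the θ^{μl} part of a multiplier of the extended system
(for θ's not depending on the derivatives of g). -/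
theorem statement13 (D N P M m : ℕ) (Ω : Set (Ed D)) (hΩ : IsOpen Ω)
    (F : Fin M → PJet (Fin N) (Fin P) m D → ℝ) (hF : ∀ a, ContDiff ℝ (⊤ : ℕ∞) (F a))
    (q : Fin M → PJet (Fin N) (Fin P) m D → ℝ) (hq : ∀ a, ContDiff ℝ (⊤ : ℕ∞) (q a))
    (θ₁ θ₂ : Fin (D + 1) → Fin P → PJet (Fin N) (Fin P) m D → ℝ)
    (hθ₁ : ∀ μ l, ContDiff ℝ (⊤ : ℕ∞) (θ₁ μ l)) (hθ₂ : ∀ μ l, ContDiff ℝ (⊤ : ℕ∞) (θ₂ μ l))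
    (J₁ J₂ : Fin (D + 1) → PJet (Fin N) (Fin P) m D → ℝ)
    (hJ₁ : ∀ μ, ContDiff ℝ (⊤ : ℕ∞) (J₁ μ)) (hJ₂ : ∀ μ, ContDiff ℝ (⊤ : ℕ∞) (J₂ μ))
    (hm₁ : ExtMultiplier m Ω F q θ₁ J₁) (hm₂ : ExtMultiplier m Ω F q θ₂ J₂)
    (hJ : ∀ u g, SmoothFields Ω u → SmoothFields Ω g → ∀ x ∈ Ω,
      Dvg (fun μ y => realizeP m (J₁ μ) u g y - realizeP m (J₂ μ) u g y) x = 0) :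
    ∀ u g, SmoothFields Ω u → SmoothFields Ω g → ∀ μ l, ∀ x ∈ Ω,
      realizeP m (θ₁ μ l) u g x = realizeP m (θ₂ μ l) u g x :=
  statement13_general D N P M m Ω hΩ F q θ₁ θ₂ J₁ J₂ hJ₁ hJ₂ hm₁ hm₂ hJ

end Paper
end
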